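/- Let x ∈ ℝ^n, let S ⊆ {1,…,n} with |S| = k ≤ n − k, and let a ≥ 0. Enumerate S as i_1, …, i_k with x_{i_1} ≤ … ≤ x_{i_k} and the k largest-valued elements outside S as j_1, …, j_k with x_{j_1} ≥ … ≥ x_{j_k}. Let L = { l ∈ {1,…,k} : x_{j_l} − x_{i_l} > a }; then L is a down-set (if l ∈ L and l' < l then l' ∈ L), and the set T_a = (S \ {i_l : l ∈ L}) ∪ {j_l : l ∈ L} maximizes the α-stable objective Σ_{i∈S'} x_i − a·|S'\S| over all k-element subsets S' of {1,…,n}. Consequently the tradeoff is monotone: as a decreases, the set of performed swaps only grows, so each item enters or exits the α-stable top-k at most once as a is swept. -/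

import Mathlib

/-!
Write `g l = x (j l) - x (i l) - a` for the net gain of the `l`-th swap. An exchange argument
(of two sets of equal size, the one whose private elements dominate the other's has the larger sum)
shows that a competitor `S'` with `t` changeouts adds at most the values of `j 0, …, j (t-1)` and
removes at least those of `i 0, …, i (t-1)`. Its objective is therefore at most
`∑ S x + ∑_{l < t} g l`, which is at most `∑ S x + ∑_{g l > 0} g l`, the objective of `T`.
-/

open Finset

namespace Finset

variable {α β M : Type*} [AddCommMonoid M] [PartialOrder M] [IsOrderedAddMonoid M]

theorem sum_le_sum_of_card_eq_of_forall_le {s : Finset α} {t : Finset β} {f : α → M}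
    {g : β → M} (hst : #s = #t) (h : ∀ a ∈ s, ∀ b ∈ t, f a ≤ g b) :
    ∑ a ∈ s, f a ≤ ∑ b ∈ t, g b := by
  let e : s ≃ t := equivOfCardEq hst
  calc ∑ a ∈ s, f a = ∑ a : s, f a := (sum_coe_sort s f).symm
    _ ≤ ∑ a : s, g (e a) := sum_le_sum fun a _ => h a a.2 (e a) (e a).2
    _ = ∑ b ∈ t, g b := by rw [Equiv.sum_comp e (fun b => g b), sum_coe_sort]

theorem sum_le_sum_of_card_eq_of_sdiff_le [DecidableEq α] {s t : Finset α} {f : α → M}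
    (hst : #s = #t) (h : ∀ a ∈ s \ t, ∀ b ∈ t \ s, f a ≤ f b) :
    ∑ a ∈ s, f a ≤ ∑ b ∈ t, f b := by
  rw [← sum_inter_add_sum_sdiff s t, ← sum_inter_add_sum_sdiff t s, inter_comm t s]
  gcongr 1
  exact sum_le_sum_of_card_eq_of_forall_le (card_sdiff_comm hst) h

theorem sum_le_sum_of_nonneg_of_nonpos_of_notMem [DecidableEq α] (s L : Finset α) {g : α → M}
    (hL : ∀ l ∈ L, 0 ≤ g l) (hLc : ∀ l ∉ L, g l ≤ 0) :
    ∑ l ∈ s, g l ≤ ∑ l ∈ L, g l := by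
  rw [← sum_inter_add_sum_sdiff s L]
  have hout : ∑ l ∈ s \ L, g l ≤ 0 := sum_nonpos fun l hl => hLc l (mem_sdiff.1 hl).2
  have hin : ∑ l ∈ s ∩ L, g l ≤ ∑ l ∈ L, g l :=
    sum_le_sum_of_subset_of_nonneg inter_subset_right fun l hl _ => hL l hl
  exact (add_le_of_le_of_nonpos le_rfl hout).trans hin

end Finset

section StableTopK

variable {n k : ℕ} (x : Fin n → ℝ) {S : Finset (Fin n)} {i j : Fin k → Fin n}

theorem card_filter_val_lt_of_le {t : ℕ} (ht : t ≤ k) : #{l : Fin k | (l : ℕ) < t} = t := by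
  rw [Fin.card_filter_val_lt, min_eq_right ht]

theorem sum_le_sum_filter_val_lt_of_top (hj_inj : Function.Injective j)
    (hj_anti : Antitone fun l => x (j l))
    (hj_top : ∀ m, m ∉ S → (∀ l, j l ≠ m) → ∀ l, x m ≤ x (j l))
    {A : Finset (Fin n)} (hA : ∀ m ∈ A, m ∉ S) (hAk : #A ≤ k) :
    ∑ m ∈ A, x m ≤ ∑ l ∈ {l : Fin k | (l : ℕ) < #A}, x (j l) := by
  rw [← sum_image hj_inj.injOn]
  refine sum_le_sum_of_card_eq_of_sdiff_le ?_ ?_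
  · rw [card_image_of_injective _ hj_inj, card_filter_val_lt_of_le hAk]
  · intro m hm b hb
    obtain ⟨p, hp, rfl⟩ := mem_image.1 (mem_sdiff.1 hb).1
    have hp : (p : ℕ) < #A := (mem_filter.1 hp).2
    by_cases hrange : ∃ l, j l = m
    · obtain ⟨l, rfl⟩ := hrange
      have hl : ¬ (l : ℕ) < #A := fun hl =>
        (mem_sdiff.1 hm).2 (mem_image_of_mem j (mem_filter.2 ⟨mem_univ l, hl⟩))
      exact hj_anti (Fin.le_def.2 (by omega))
    · exact hj_top m (hA m (mem_sdiff.1 hm).1) (fun l hl => hrange ⟨l, hl⟩) p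

theorem sum_filter_val_lt_le_of_bottom (hS : #S = k) (hi_inj : Function.Injective i)
    (hi_mem : ∀ l, i l ∈ S) (hi_mono : Monotone fun l => x (i l))
    {R : Finset (Fin n)} (hR : R ⊆ S) :
    ∑ l ∈ {l : Fin k | (l : ℕ) < #R}, x (i l) ≤ ∑ m ∈ R, x m := by
  have hrange : univ.image i = S :=
    eq_of_subset_of_card_le (image_subset_iff.2 fun l _ => hi_mem l)
      (by rw [card_image_of_injective _ hi_inj, card_univ, Fintype.card_fin, hS])
  have hRk : #R ≤ k := hS ▸ card_le_card hR
  rw [← sum_image hi_inj.injOn]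
  refine sum_le_sum_of_card_eq_of_sdiff_le ?_ ?_
  · rw [card_image_of_injective _ hi_inj, card_filter_val_lt_of_le hRk]
  · intro a ha m hm
    obtain ⟨p, hp, rfl⟩ := mem_image.1 (mem_sdiff.1 ha).1
    have hp : (p : ℕ) < #R := (mem_filter.1 hp).2
    obtain ⟨l, -, rfl⟩ := mem_image.1 (hrange ▸ hR (mem_sdiff.1 hm).1)
    have hl : ¬ (l : ℕ) < #R := fun hl =>
      (mem_sdiff.1 hm).2 (mem_image_of_mem i (mem_filter.2 ⟨mem_univ l, hl⟩))
    exact hi_mono (Fin.le_def.2 (by omega))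

variable (L : Finset (Fin k))

theorem disjoint_sdiff_image_image (hj_mem : ∀ l, j l ∉ S) :
    Disjoint (S \ L.image i) (L.image j) :=
  disjoint_right.2 fun _ hm hmS => by
    obtain ⟨l, -, rfl⟩ := mem_image.1 hm
    exact hj_mem l (mem_sdiff.1 hmS).1

theorem card_sdiff_image_union_image (hi_inj : Function.Injective i)
    (hj_inj : Function.Injective j) (hi_mem : ∀ l, i l ∈ S) (hj_mem : ∀ l, j l ∉ S) :
    #((S \ L.image i) ∪ L.image j) = #S := by
  have hiS : L.image i ⊆ S := image_subset_iff.2 fun l _ => hi_mem l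
  have hiL : #(L.image i) ≤ #S := card_le_card hiS
  rw [card_union_of_disjoint (disjoint_sdiff_image_image L hj_mem), card_sdiff_of_subset hiS,
    card_image_of_injective _ hj_inj, ← card_image_of_injective L hi_inj]
  omega

theorem sdiff_image_union_image_sdiff (hj_mem : ∀ l, j l ∉ S) :
    ((S \ L.image i) ∪ L.image j) \ S = L.image j := by
  rw [union_sdiff_distrib, sdiff_sdiff_left, sup_eq_union,
    sdiff_eq_empty_iff_subset.2 subset_union_right, empty_union, Finset.sdiff_eq_self_iff_disjoint]
  exact disjoint_left.2 fun m hm hmS => by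
    obtain ⟨l, -, rfl⟩ := mem_image.1 hm
    exact hj_mem l hmS

theorem sum_sdiff_image_union_image (hi_inj : Function.Injective i)
    (hj_inj : Function.Injective j) (hi_mem : ∀ l, i l ∈ S) (hj_mem : ∀ l, j l ∉ S) :
    ∑ m ∈ (S \ L.image i) ∪ L.image j, x m = ∑ m ∈ S, x m + ∑ l ∈ L, (x (j l) - x (i l)) := by
  have hiS : L.image i ⊆ S := image_subset_iff.2 fun l _ => hi_mem l
  rw [sum_union (disjoint_sdiff_image_image L hj_mem), sum_sdiff_eq_sub hiS,
    sum_image hi_inj.injOn, sum_image hj_inj.injOn, sum_sub_distrib]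
  ring

theorem stable_objective_le_sum_filter_val_lt (hS : #S = k) (hi_inj : Function.Injective i)
    (hi_mem : ∀ l, i l ∈ S) (hi_mono : Monotone fun l => x (i l))
    (hj_inj : Function.Injective j) (hj_anti : Antitone fun l => x (j l))
    (hj_top : ∀ m, m ∉ S → (∀ l, j l ≠ m) → ∀ l, x m ≤ x (j l))
    (a : ℝ) {S' : Finset (Fin n)} (hS' : #S' = k) :
    ∑ m ∈ S', x m - a * #(S' \ S) ≤
      ∑ m ∈ S, x m + ∑ l ∈ {l : Fin k | (l : ℕ) < #(S' \ S)}, (x (j l) - x (i l) - a) := by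
  have hcard : #(S \ S') = #(S' \ S) := card_sdiff_comm (hS.trans hS'.symm)
  have hk : #(S' \ S) ≤ k := hS' ▸ card_le_card sdiff_subset
  have hadded := sum_le_sum_filter_val_lt_of_top x hj_inj hj_anti hj_top
    (fun m hm => (mem_sdiff.1 hm).2) hk
  have hremoved := sum_filter_val_lt_le_of_bottom x hS hi_inj hi_mem hi_mono
    (sdiff_subset (s := S) (t := S'))
  rw [hcard] at hremoved
  have hswap := sum_sdiff_sub_sum_sdiff (s₁ := S) (s₂ := S') (f := x)
  rw [sum_sub_distrib, sum_sub_distrib, sum_const, card_filter_val_lt_of_le hk, nsmul_eq_mul]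
  linarith

end StableTopK

theorem alpha_stable_top_k_general (n k : ℕ) (x : Fin n → ℝ) (S : Finset (Fin n))
    (hS : S.card = k) (a : ℝ)
    (i j : Fin k → Fin n)
    (hi_inj : Function.Injective i) (hi_mem : ∀ l, i l ∈ S)
    (hi_mono : Monotone fun l => x (i l))
    (hj_inj : Function.Injective j) (hj_mem : ∀ l, j l ∉ S)
    (hj_anti : Antitone fun l => x (j l))
    (hj_top : ∀ m, m ∉ S → (∀ l, j l ≠ m) → ∀ l, x m ≤ x (j l)) :
    let L : Finset (Fin k) := Finset.univ.filter fun l => a < x (j l) - x (i l)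
    let T : Finset (Fin n) := (S \ L.image i) ∪ L.image j
    (∀ l ∈ L, ∀ l' : Fin k, l' < l → l' ∈ L) ∧
    T.card = k ∧
    ∀ S' : Finset (Fin n), S'.card = k →
      ∑ m ∈ S', x m - a * ((S' \ S).card : ℝ) ≤
        ∑ m ∈ T, x m - a * ((T \ S).card : ℝ) := by
  intro L T
  have hmemL : ∀ l, l ∈ L ↔ a < x (j l) - x (i l) := by simp [L]
  refine ⟨fun l hl l' hl' => ?_,
    (card_sdiff_image_union_image L hi_inj hj_inj hi_mem hj_mem).trans hS, fun S' hS' => ?_⟩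
  · have hgain := (hmemL l).1 hl
    exact (hmemL l').2 (by linarith [hj_anti hl'.le, hi_mono hl'.le])
  calc ∑ m ∈ S', x m - a * #(S' \ S)
      ≤ ∑ m ∈ S, x m + ∑ l ∈ {l : Fin k | (l : ℕ) < #(S' \ S)}, (x (j l) - x (i l) - a) :=
        stable_objective_le_sum_filter_val_lt x hS hi_inj hi_mem hi_mono hj_inj hj_anti hj_top a hS'
    _ ≤ ∑ m ∈ S, x m + ∑ l ∈ L, (x (j l) - x (i l) - a) := by
        gcongr 1
        exact sum_le_sum_of_nonneg_of_nonpos_of_notMem _ L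
          (fun l hl => by linarith [(hmemL l).1 hl]) (fun l hl => by linarith [(hmemL l).not.1 hl])
    _ = ∑ m ∈ T, x m - a * #(T \ S) := by
        rw [sum_sdiff_image_union_image x L hi_inj hj_inj hi_mem hj_mem,
          sdiff_image_union_image_sdiff L hj_mem, card_image_of_injective L hj_inj, sum_sub_distrib,
          sum_const, nsmul_eq_mul]
        ring

/-- **The α-stable top-k optimum performs exactly the swaps with gain exceeding `a`,
and the tradeoff is monotone.**
Let `|S| = k ≤ n - k`, with `i` enumerating `S` in nondecreasing order of value and `j`
enumerating the `k` largest-valued elements of the complement in nonincreasing order.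
Let `L = {l : x (j l) - x (i l) > a}`.  Then `L` is a down-set, and
`T = (S \ i(L)) ∪ j(L)` is a `k`-element set maximizing
`∑_{m∈S'} x m - a * |S' \ S|` over all `k`-element subsets `S'`. -/
theorem alpha_stable_top_k (n k : ℕ) (x : Fin n → ℝ) (S : Finset (Fin n))
    (hS : S.card = k) (hk : k ≤ n - k) (a : ℝ) (ha : 0 ≤ a)
    (i j : Fin k → Fin n)
    (hi_inj : Function.Injective i) (hi_mem : ∀ l, i l ∈ S)
    (hi_mono : Monotone fun l => x (i l))
    (hj_inj : Function.Injective j) (hj_mem : ∀ l, j l ∉ S)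
    (hj_anti : Antitone fun l => x (j l))
    (hj_top : ∀ m, m ∉ S → (∀ l, j l ≠ m) → ∀ l, x m ≤ x (j l)) :
    let L : Finset (Fin k) := Finset.univ.filter fun l => a < x (j l) - x (i l)
    let T : Finset (Fin n) := (S \ L.image i) ∪ L.image j
    (∀ l ∈ L, ∀ l' : Fin k, l' < l → l' ∈ L) ∧
    T.card = k ∧
    ∀ S' : Finset (Fin n), S'.card = k →
      ∑ m ∈ S', x m - a * ((S' \ S).card : ℝ) ≤
        ∑ m ∈ T, x m - a * ((T \ S).card : ℝ) :=
  alpha_stable_top_k_general n k x S hS a i j hi_inj hi_mem hi_mono hj_inj hj_mem hj_anti hj_top
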